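/- Let (Y¹, Z¹) with drivers (f¹_n) and (Y², Z²) with drivers (f²_n) be two solutions of the generic discrete scheme whose driver differences satisfy the driver-difference assumption with parameters k_y ∈ ℝ, L_f > 0, L_v ≥ 0 and nonnegative reals (ε_n)_{0≤n<N}. Assume k_y + L_f ≥ 0 and h·(2k_y + 2L_f) < 1, and set A := (1 − h·(2k_y + 2L_f))⁻¹. Then Σ_{n=0}^{N−1} h·E[|δZ_n|²] ≤ (2 + 4·N·h·(k_y + L_f)·A^N)·E[(δY_N)²] + ( 2·(N·h)²·L_v·(k_y + L_f)·L_f⁻¹·A^N + N·h·L_v·L_f⁻¹ )·max_{0≤k<N} ε_k. -/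

import Mathlib

open MeasureTheory Finset

noncomputable section

/-- The Brownian-type increments `ΔW_n : Ω → ℝ^d` are `𝒢_{n+1}`-measurable, have
square-integrable components, conditional mean zero and conditional covariance `h·I`. -/
def IncrementsOK {Ω : Type} [MeasurableSpace Ω] (P : Measure Ω) (N d : ℕ) (h : ℝ)
    (𝒢 : Filtration ℕ (inferInstance : MeasurableSpace Ω))
    (ΔW : ℕ → Ω → Fin d → ℝ) : Prop :=
  ∀ n < N,
    (∀ i, StronglyMeasurable[𝒢 (n + 1)] (fun ω => ΔW n ω i)) ∧
    (∀ i, MemLp (fun ω => ΔW n ω i) 2 P) ∧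
    (∀ i, P[(fun ω => ΔW n ω i) | 𝒢 n] =ᵐ[P] 0) ∧
    (∀ i j, P[(fun ω => ΔW n ω i * ΔW n ω j) | 𝒢 n]
        =ᵐ[P] fun _ => if i = j then h else 0)

/-- `(Y, Z)` solves the generic discrete scheme with driver terms `f`:
each `Y_n` is square-integrable and `𝒢_n`-measurable, each `f_n` is square-integrable and
`𝒢_n`-measurable, and almost surely `Y_n = E[Y_{n+1} | 𝒢_n] + h·f_n` and
`Z_nⁱ = h⁻¹·E[Y_{n+1}·ΔW_nⁱ | 𝒢_n]` for all `n < N`. -/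
def SolvesScheme {Ω : Type} [MeasurableSpace Ω] (P : Measure Ω) (N d : ℕ) (h : ℝ)
    (𝒢 : Filtration ℕ (inferInstance : MeasurableSpace Ω))
    (ΔW : ℕ → Ω → Fin d → ℝ)
    (Y : ℕ → Ω → ℝ) (Z : ℕ → Ω → Fin d → ℝ) (f : ℕ → Ω → ℝ) : Prop :=
  (∀ n ≤ N, MemLp (Y n) 2 P) ∧
  (∀ n ≤ N, StronglyMeasurable[𝒢 n] (Y n)) ∧
  (∀ n < N, MemLp (f n) 2 P) ∧
  (∀ n < N, StronglyMeasurable[𝒢 n] (f n)) ∧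
  (∀ n < N, Y n =ᵐ[P] fun ω => (P[Y (n + 1) | 𝒢 n]) ω + h * f n ω) ∧
  (∀ n < N, ∀ i, (fun ω => Z n ω i)
      =ᵐ[P] fun ω => h⁻¹ * (P[(fun ω' => Y (n + 1) ω' * ΔW n ω' i) | 𝒢 n]) ω)

/-- The driver-difference assumption with parameters `k_y, L_f, L_v` and nonnegative
reals `ε_n`: for each `n < N` the difference of the drivers splits as `φ_n + ψ_n` with
`E[φ_n·δY_n] ≤ k_y·E[(δY_n)²]` and `E[ψ_n²] ≤ L_v·ε_n + L_f·E[|δZ_n|²]`. -/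
def DriverDiff {Ω : Type} [MeasurableSpace Ω] (P : Measure Ω) (N d : ℕ)
    (𝒢 : Filtration ℕ (inferInstance : MeasurableSpace Ω))
    (k_y L_f L_v : ℝ) (ε : ℕ → ℝ)
    (Y1 Y2 : ℕ → Ω → ℝ) (Z1 Z2 : ℕ → Ω → Fin d → ℝ) (f1 f2 : ℕ → Ω → ℝ) : Prop :=
  ∀ n < N, ∃ φ ψ : Ω → ℝ,
    StronglyMeasurable[𝒢 n] φ ∧ StronglyMeasurable[𝒢 n] ψ ∧
    MemLp φ 2 P ∧ MemLp ψ 2 P ∧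
    (fun ω => f1 n ω - f2 n ω) =ᵐ[P] (fun ω => φ ω + ψ ω) ∧
    (∫ ω, φ ω * (Y1 n ω - Y2 n ω) ∂P) ≤ k_y * ∫ ω, (Y1 n ω - Y2 n ω) ^ 2 ∂P ∧
    (∫ ω, (ψ ω) ^ 2 ∂P)
      ≤ L_v * ε n + L_f * ∫ ω, (∑ i, (Z1 n ω i - Z2 n ω i) ^ 2) ∂P

/-!
Write `δY_n = E[δY_{n+1} | 𝒢_n] + h (φ_n + ψ_n)`. Testing this against `δY_n` and using Young's
inequality gives `(1 - h(2k_y + 2L_f)) E[δY_n²] ≤ E[E[δY_{n+1} | 𝒢_n]²] + h/(2L_f) E[ψ_n²]`.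
Because `E[ΔW_nⁱ ΔW_nʲ | 𝒢_n] = h δᵢⱼ`, the components of `h δZ_n` are the coefficients of
`δY_{n+1} - E[δY_{n+1} | 𝒢_n]` along a conditionally orthogonal family, and Bessel's inequality
gives `h E|δZ_n|² ≤ E[δY_{n+1}²] - E[E[δY_{n+1} | 𝒢_n]²]`. With the bound on `E[ψ_n²]` this is
the energy inequality
`(1 - h(2k_y + 2L_f)) E[δY_n²] + (h/2) E|δZ_n|² ≤ E[δY_{n+1}²] + h L_v/(2L_f) ε_n`.
Iterated backwards it bounds every `E[δY_n²]` by `A^N (E[δY_N²] + N h L_v/(2L_f) max ε)`, and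
summed over `n` it telescopes to the claim.
-/

section ConditionalExpectation

variable {Ω : Type*} {m m0 : MeasurableSpace Ω} {P : Measure Ω}

lemma integral_mul_le_of_pos {f g : Ω → ℝ} (hf : MemLp f 2 P) (hg : MemLp g 2 P) {a : ℝ}
    (ha : 0 < a) :
    ∫ ω, f ω * g ω ∂P ≤ a / 2 * ∫ ω, f ω ^ 2 ∂P + (2 * a)⁻¹ * ∫ ω, g ω ^ 2 ∂P := by
  have hyoung ω : f ω * g ω ≤ a / 2 * f ω ^ 2 + (2 * a)⁻¹ * g ω ^ 2 := by
    have := sq_nonneg (a * f ω - g ω)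
    field_simp
    nlinarith
  rw [← integral_const_mul, ← integral_const_mul,
    ← integral_add (hf.integrable_sq.const_mul _) (hg.integrable_sq.const_mul _)]
  exact integral_mono (hf.integrable_mul hg)
    ((hf.integrable_sq.const_mul _).add (hg.integrable_sq.const_mul _)) hyoung

lemma integral_sq_le_of_ae_eq_add {X c φ ψ : Ω → ℝ} {h k L : ℝ} (hh : 0 < h) (hL : 0 < L)
    (hX : MemLp X 2 P) (hc : MemLp c 2 P) (hφ : MemLp φ 2 P) (hψ : MemLp ψ 2 P)
    (hXeq : X =ᵐ[P] fun ω => c ω + h * (φ ω + ψ ω))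
    (hφX : ∫ ω, φ ω * X ω ∂P ≤ k * ∫ ω, X ω ^ 2 ∂P) :
    (1 - h * (2 * k + 2 * L)) * ∫ ω, X ω ^ 2 ∂P
      ≤ ∫ ω, c ω ^ 2 ∂P + h / (2 * L) * ∫ ω, ψ ω ^ 2 ∂P := by
  have hsplit : ∫ ω, X ω ^ 2 ∂P
      = ∫ ω, X ω * c ω ∂P + h * ∫ ω, φ ω * X ω ∂P + h * ∫ ω, X ω * ψ ω ∂P := by
    have hXc : Integrable (fun ω => X ω * c ω) P := hX.integrable_mul hc
    have hφX' : Integrable (fun ω => h * (φ ω * X ω)) P := (hφ.integrable_mul hX).const_mul h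
    have hXψ : Integrable (fun ω => h * (X ω * ψ ω)) P := (hX.integrable_mul hψ).const_mul h
    have hXcφX : Integrable (fun ω => X ω * c ω + h * (φ ω * X ω)) P := hXc.add hφX'
    rw [← integral_const_mul, ← integral_const_mul, ← integral_add hXc hφX',
      ← integral_add hXcφX hXψ]
    refine integral_congr_ae ?_
    filter_upwards [hXeq] with ω hω
    rw [sq]
    nth_rw 1 [hω]
    ring
  have hXc := integral_mul_le_of_pos hX hc one_pos
  have hXψ := integral_mul_le_of_pos hX hψ (mul_pos two_pos hL)
  have hφX' := mul_le_mul_of_nonneg_left hφX hh.le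
  have hXψ' := mul_le_mul_of_nonneg_left hXψ hh.le
  linear_combination 2 * hsplit + 2 * hXc + 2 * hφX' + 2 * hXψ'

lemma integral_le_of_forall_integral_indicator_le {s : Ω → ℝ} (hs : Measurable s)
    (hs0 : ∀ ω, 0 ≤ s ω) {C : ℝ} (hC : 0 ≤ C)
    (hbound : ∀ R : ℕ, ∫ ω, {ω | s ω ≤ R}.indicator s ω ∂P ≤ C) :
    ∫ ω, s ω ∂P ≤ C := by
  by_cases hint : Integrable s P
  swap
  · rw [integral_undef hint]; exact hC
  refine le_of_tendsto' (integral_tendsto_of_tendsto_of_monotone (fun R => ?_) hint ?_ ?_) hbound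
  · exact hint.indicator (hs measurableSet_Iic)
  · refine ae_of_all _ fun ω R R' hRR' => ?_
    by_cases hR : s ω ≤ R
    · have hR' : s ω ≤ R' := hR.trans (by exact_mod_cast hRR')
      simp [Set.indicator_of_mem, hR, hR']
    · simp only [Set.indicator_of_notMem (show ω ∉ {ω | s ω ≤ R} from hR)]
      exact Set.indicator_nonneg (fun ω _ => hs0 ω) ω
  · refine ae_of_all _ fun ω => tendsto_const_nhds.congr' ?_
    filter_upwards [Filter.eventually_ge_atTop ⌈s ω⌉₊] with R hR
    rw [Set.indicator_of_mem]
    exact (Nat.le_ceil (s ω)).trans (by exact_mod_cast hR)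

variable [IsFiniteMeasure P]

lemma integral_mul_condExp_of_stronglyMeasurable (hm : m ≤ m0) {b g : Ω → ℝ}
    (hb : StronglyMeasurable[m] b) (hbg : Integrable (b * g) P) (hg : Integrable g P) :
    ∫ ω, b ω * (P[g|m]) ω ∂P = ∫ ω, b ω * g ω ∂P :=
  calc ∫ ω, b ω * (P[g|m]) ω ∂P = ∫ ω, (P[b * g|m]) ω ∂P :=
        integral_congr_ae (condExp_mul_of_stronglyMeasurable_left hb hbg hg).symm
    _ = ∫ ω, b ω * g ω ∂P := integral_condExp hm

lemma integral_sq_sub_condExp (hm : m ≤ m0) {Y : Ω → ℝ} (hY : MemLp Y 2 P) :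
    ∫ ω, (Y ω - (P[Y|m]) ω) ^ 2 ∂P = ∫ ω, Y ω ^ 2 ∂P - ∫ ω, (P[Y|m]) ω ^ 2 ∂P :=
  calc ∫ ω, (Y ω - (P[Y|m]) ω) ^ 2 ∂P = ∫ ω, ProbabilityTheory.condVar m Y P ω ∂P :=
        (integral_condExp hm).symm
    _ = ∫ ω, ((P[Y ^ 2|m]) ω - (P[Y|m]) ω ^ 2) ∂P :=
        integral_congr_ae (ProbabilityTheory.condVar_ae_eq_condExp_sq_sub_sq_condExp hm hY)
    _ = _ := by
        rw [integral_sub integrable_condExp (hY.condExp one_le_two).integrable_sq,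
          integral_condExp hm]
        rfl

lemma condExp_sub_condExp_mul_ae_eq {Y V : Ω → ℝ} (hY : MemLp Y 2 P)
    (hV : MemLp V 2 P) (hV0 : P[V|m] =ᵐ[P] 0) :
    P[(Y - P[Y|m]) * V|m] =ᵐ[P] P[Y * V|m] := by
  have hcV : Integrable (P[Y|m] * V) P := (hY.condExp one_le_two).integrable_mul hV
  rw [sub_mul]
  filter_upwards [condExp_sub (m := m) (hY.integrable_mul hV) hcV,
    condExp_mul_of_stronglyMeasurable_left stronglyMeasurable_condExp hcV
      (hV.integrable one_le_two), hV0] with ω hsub hpull hzero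
  simp [hsub, hpull, hzero]

variable {ι : Type*} [Fintype ι] [DecidableEq ι] {h : ℝ} {M : Ω → ℝ} {W : ι → Ω → ℝ}

lemma two_mul_sum_integral_mul_condExp_sub_le_integral_sq (hm : m ≤ m0) (hM : MemLp M 2 P)
    (hW : ∀ i, MemLp (W i) 2 P)
    (hcov : ∀ i j, P[W i * W j|m] =ᵐ[P] fun _ => if i = j then h else 0)
    {b : ι → Ω → ℝ} {C : ℝ} (hb : ∀ i, StronglyMeasurable[m] (b i))
    (hbC : ∀ i ω, ‖b i ω‖ ≤ C) :
    2 * ∑ i, ∫ ω, b i ω * (P[M * W i|m]) ω ∂P - h * ∑ i, ∫ ω, b i ω ^ 2 ∂P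
      ≤ ∫ ω, M ω ^ 2 ∂P := by
  have hb_top i : MemLp (b i) ⊤ P :=
    memLp_top_of_bound ((hb i).mono hm).aestronglyMeasurable C (ae_of_all _ (hbC i))
  set g := ∑ i, b i * W i
  have hg : MemLp g 2 P := memLp_finsetSum' _ fun i _ => (hW i).mul (hb_top i)
  have hMg : ∫ ω, M ω * g ω ∂P = ∑ i, ∫ ω, b i ω * (P[M * W i|m]) ω ∂P := by
    have hint i : Integrable (b i * (M * W i)) P :=
      (hM.integrable_mul (hW i)).mul_of_top_right (hb_top i)
    calc ∫ ω, M ω * g ω ∂P = ∫ ω, ∑ i, b i ω * (M * W i) ω ∂P := by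
          congr 1 with ω
          simp only [g, Finset.sum_apply, Pi.mul_apply, mul_sum]
          exact sum_congr rfl fun i _ => by ring
      _ = ∑ i, ∫ ω, b i ω * (M * W i) ω ∂P := integral_finsetSum _ fun i _ => hint i
      _ = _ := sum_congr rfl fun i _ => (integral_mul_condExp_of_stronglyMeasurable hm (hb i)
          (hint i) (hM.integrable_mul (hW i))).symm
  have hgg : ∫ ω, g ω ^ 2 ∂P = h * ∑ i, ∫ ω, b i ω ^ 2 ∂P := by
    have hint i j : Integrable (fun ω => (b i * b j) ω * (W i * W j) ω) P :=
      ((hW i).integrable_mul (hW j)).mul_of_top_right ((hb_top j).mul (hb_top i))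
    have hij i j : ∫ ω, (b i * b j) ω * (W i * W j) ω ∂P
        = if i = j then h * ∫ ω, b i ω ^ 2 ∂P else 0 := by
      rw [← integral_mul_condExp_of_stronglyMeasurable hm ((hb i).mul (hb j)) (hint i j)
        ((hW i).integrable_mul (hW j))]
      split_ifs with hij
      · subst hij
        rw [← integral_const_mul]
        refine integral_congr_ae ?_
        filter_upwards [hcov i i] with ω hω
        simp [hω]; ring
      · rw [← integral_zero Ω ℝ]
        refine integral_congr_ae ?_
        filter_upwards [hcov i j] with ω hω
        simp [hω, hij]
    calc ∫ ω, g ω ^ 2 ∂P = ∫ ω, ∑ i, ∑ j, (b i * b j) ω * (W i * W j) ω ∂P := by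
          congr 1 with ω
          simp only [g, Finset.sum_apply, Pi.mul_apply, sq, sum_mul_sum]
          exact sum_congr rfl fun i _ => sum_congr rfl fun j _ => by ring
      _ = ∑ i, ∑ j, ∫ ω, (b i * b j) ω * (W i * W j) ω ∂P := by
          rw [integral_finsetSum _ fun i _ => integrable_finsetSum _ fun j _ => hint i j]
          exact sum_congr rfl fun i _ => integral_finsetSum _ fun j _ => hint i j
      _ = h * ∑ i, ∫ ω, b i ω ^ 2 ∂P := by simp_rw [hij, sum_ite_eq, mem_univ, if_true, mul_sum]
  have hM2 := hM.integrable_sq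
  have hMg_int : Integrable (fun ω => 2 * (M ω * g ω)) P := (hM.integrable_mul hg).const_mul 2
  have hM2_sub : Integrable (fun ω => M ω ^ 2 - 2 * (M ω * g ω)) P := hM2.sub hMg_int
  have hexpand : ∫ ω, (M ω - g ω) ^ 2 ∂P
      = ∫ ω, M ω ^ 2 ∂P - 2 * ∫ ω, M ω * g ω ∂P + ∫ ω, g ω ^ 2 ∂P := by
    rw [show (fun ω => (M ω - g ω) ^ 2) = fun ω => (M ω ^ 2 - 2 * (M ω * g ω)) + g ω ^ 2 by
        ext; ring,
      integral_add hM2_sub hg.integrable_sq, integral_sub hM2 hMg_int, integral_const_mul]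
  have hnonneg : 0 ≤ ∫ ω, (M ω - g ω) ^ 2 ∂P := integral_nonneg fun ω => sq_nonneg _
  rw [← hMg, ← hgg]
  linarith

/-- The coefficients `P[M * W i|m]` are only integrable, so they are tested against their
truncations to `{∑ i, P[M * W i|m] ^ 2 ≤ R}` and the bound is recovered by monotone convergence. -/
lemma integral_sum_sq_condExp_mul_le (hm : m ≤ m0) (hh : 0 < h) (hM : MemLp M 2 P)
    (hW : ∀ i, MemLp (W i) 2 P)
    (hcov : ∀ i j, P[W i * W j|m] =ᵐ[P] fun _ => if i = j then h else 0) :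
    ∫ ω, ∑ i, (P[M * W i|m]) ω ^ 2 ∂P ≤ h * ∫ ω, M ω ^ 2 ∂P := by
  set v : ι → Ω → ℝ := fun i => P[M * W i|m]
  set s : Ω → ℝ := fun ω => ∑ i, v i ω ^ 2
  have hs : StronglyMeasurable[m] s :=
    Finset.stronglyMeasurable_fun_sum _ fun i _ => stronglyMeasurable_condExp.pow 2
  refine integral_le_of_forall_integral_indicator_le (hs.measurable.mono hm le_rfl)
    (fun ω => sum_nonneg fun i _ => sq_nonneg _)
    (mul_nonneg hh.le (integral_nonneg fun ω => sq_nonneg _)) fun R => ?_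
  set A : Set Ω := {ω | s ω ≤ R}
  have hA : MeasurableSet[m] A := hs.measurable measurableSet_Iic
  set b : ι → Ω → ℝ := fun i ω => h⁻¹ * A.indicator (v i) ω
  have hb i : StronglyMeasurable[m] (b i) :=
    (stronglyMeasurable_condExp.indicator hA).const_mul _
  have hbC i ω : ‖b i ω‖ ≤ h⁻¹ * √R := by
    rw [norm_mul, Real.norm_of_nonneg (inv_nonneg.2 hh.le)]
    gcongr
    by_cases hω : ω ∈ A
    · rw [Set.indicator_of_mem hω, Real.norm_eq_abs]
      exact Real.abs_le_sqrt ((single_le_sum (f := fun i => v i ω ^ 2)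
        (fun i _ => sq_nonneg _) (mem_univ i)).trans hω)
    · simp [Set.indicator_of_notMem hω]
  have hbv : ∑ i, ∫ ω, b i ω * v i ω ∂P = h⁻¹ * ∫ ω, A.indicator s ω ∂P := by
    rw [← integral_finsetSum, ← integral_const_mul]
    · congr 1 with ω
      by_cases hω : ω ∈ A <;> simp [b, s, hω, mul_sum, sq, mul_assoc]
    · exact fun i _ => integrable_condExp.bdd_mul ((hb i).mono hm).aestronglyMeasurable
        (ae_of_all _ (hbC i))
  have hbb : ∑ i, ∫ ω, b i ω ^ 2 ∂P = h⁻¹ ^ 2 * ∫ ω, A.indicator s ω ∂P := by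
    rw [← integral_finsetSum, ← integral_const_mul]
    · congr 1 with ω
      by_cases hω : ω ∈ A <;> simp [b, s, hω, mul_sum, mul_pow]
    · exact fun i _ => (MemLp.of_bound ((hb i).mono hm).aestronglyMeasurable _
        (ae_of_all _ (hbC i))).integrable_sq
  have hbessel : 2 * ∑ i, ∫ ω, b i ω * v i ω ∂P - h * ∑ i, ∫ ω, b i ω ^ 2 ∂P
      ≤ ∫ ω, M ω ^ 2 ∂P :=
    two_mul_sum_integral_mul_condExp_sub_le_integral_sq hm hM hW hcov hb hbC
  rw [hbv, hbb] at hbessel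
  calc ∫ ω, A.indicator s ω ∂P
      = h * (2 * (h⁻¹ * ∫ ω, A.indicator s ω ∂P) - h * (h⁻¹ ^ 2 * ∫ ω, A.indicator s ω ∂P)) := by
        field_simp; ring
    _ ≤ h * ∫ ω, M ω ^ 2 ∂P := by gcongr

lemma integral_sum_sq_condExp_mul_le_of_condExp_eq_zero (hm : m ≤ m0) (hh : 0 < h)
    {Y : Ω → ℝ} (hY : MemLp Y 2 P) (hW : ∀ i, MemLp (W i) 2 P) (hW0 : ∀ i, P[W i|m] =ᵐ[P] 0)
    (hcov : ∀ i j, P[W i * W j|m] =ᵐ[P] fun _ => if i = j then h else 0) :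
    ∫ ω, ∑ i, (P[Y * W i|m]) ω ^ 2 ∂P
      ≤ h * (∫ ω, Y ω ^ 2 ∂P - ∫ ω, (P[Y|m]) ω ^ 2 ∂P) := by
  rw [← integral_sq_sub_condExp hm hY]
  refine le_of_eq_of_le (integral_congr_ae ?_)
    (integral_sum_sq_condExp_mul_le hm hh (hY.sub (hY.condExp one_le_two)) hW hcov)
  filter_upwards [ae_all_iff.2 fun i => condExp_sub_condExp_mul_ae_eq hY (hW i) (hW0 i)]
    with ω hω
  exact sum_congr rfl fun i _ => by rw [← hω i]; rfl

end ConditionalExpectation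

lemma le_pow_mul_of_le_mul_succ {N : ℕ} {u : ℕ → ℝ} {A c : ℝ} (hA : 1 ≤ A) (hc : 0 ≤ c)
    (huN : 0 ≤ u N) (hu : ∀ n < N, u n ≤ A * (u (n + 1) + c)) :
    ∀ n ≤ N, u n ≤ A ^ N * (u N + N * c) := by
  have hback : ∀ k n, n + k = N → u n ≤ A ^ k * (u N + k * c) := by
    intro k
    induction k with
    | zero => rintro n rfl; simp
    | succ k ih =>
      intro n hn
      have hAc : A * c ≤ A ^ (k + 1) * c :=
        mul_le_mul_of_nonneg_right (le_self_pow₀ hA k.succ_ne_zero) hc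
      calc u n ≤ A * (u (n + 1) + c) := hu n (by omega)
        _ ≤ A * (A ^ k * (u N + k * c) + c) := by gcongr; exact ih (n + 1) (by omega)
        _ = A ^ (k + 1) * (u N + k * c) + A * c := by ring
        _ ≤ A ^ (k + 1) * (u N + (k + 1 : ℕ) * c) := by push_cast; linear_combination hAc
  intro n hn
  calc u n ≤ A ^ (N - n) * (u N + (N - n : ℕ) * c) := hback (N - n) n (by omega)
    _ ≤ A ^ N * (u N + N * c) := by gcongr <;> omega

lemma sum_mul_le_of_energy_step {N : ℕ} {h k L Lv A e : ℝ} {u z ε : ℕ → ℝ}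
    (hh : 0 < h) (hL : 0 < L) (hLv : 0 ≤ Lv) (hkL : 0 ≤ k + L) (hsmall : h * (2 * k + 2 * L) < 1)
    (hA : A = (1 - h * (2 * k + 2 * L))⁻¹) (hu : ∀ n, 0 ≤ u n) (hz : ∀ n < N, 0 ≤ z n)
    (he : 0 ≤ e) (hεe : ∀ n < N, ε n ≤ e)
    (hstep : ∀ n < N, (1 - h * (2 * k + 2 * L)) * u n + h / 2 * z n
      ≤ u (n + 1) + h * Lv / (2 * L) * ε n) :
    ∑ n ∈ range N, h * z n
      ≤ (2 + 4 * N * h * (k + L) * A ^ N) * u N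
        + (2 * (N * h) ^ 2 * Lv * (k + L) * L⁻¹ * A ^ N + N * h * Lv * L⁻¹) * e := by
  set B := h * (2 * k + 2 * L)
  set C := h * Lv / (2 * L)
  have hB : 0 ≤ B := mul_nonneg hh.le (by linarith)
  have hC : 0 ≤ C := by positivity
  have hAB : A * (1 - B) = 1 := by rw [hA]; exact inv_mul_cancel₀ (by linarith)
  have hA1 : 1 ≤ A := by nlinarith
  have hu_le : ∀ n ≤ N, u n ≤ A ^ N * (u N + N * (C * e)) := by
    refine le_pow_mul_of_le_mul_succ hA1 (by positivity) (hu N) fun n hn => ?_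
    have hCε : C * ε n ≤ C * e := mul_le_mul_of_nonneg_left (hεe n hn) hC
    have : (1 - B) * u n ≤ u (n + 1) + C * e := by nlinarith [hstep n hn, hz n hn]
    calc u n = A * ((1 - B) * u n) := by rw [← mul_assoc, hAB, one_mul]
      _ ≤ A * (u (n + 1) + C * e) := by gcongr
  have hsum : ∑ n ∈ range N, h * z n
      ≤ 2 * (u N - u 0) + 2 * B * ∑ n ∈ range N, u n + 2 * C * ∑ n ∈ range N, ε n :=
    calc ∑ n ∈ range N, h * z n
        ≤ ∑ n ∈ range N, (2 * (u (n + 1) - u n) + 2 * B * u n + 2 * C * ε n) :=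
          sum_le_sum fun n hn => by linarith [hstep n (mem_range.1 hn)]
      _ = _ := by
          rw [sum_add_distrib, sum_add_distrib, ← mul_sum, ← mul_sum, ← mul_sum, sum_range_sub]
  have hsum_u : ∑ n ∈ range N, u n ≤ N * (A ^ N * (u N + N * (C * e))) := by
    simpa using sum_le_sum fun n hn => hu_le n (mem_range.1 hn).le
  have hsum_ε : ∑ n ∈ range N, ε n ≤ N * e := by
    simpa using sum_le_sum fun n hn => hεe n (mem_range.1 hn)
  have hfinal : 2 * u N + 2 * B * (N * (A ^ N * (u N + N * (C * e)))) + 2 * C * (N * e)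
      = (2 + 4 * N * h * (k + L) * A ^ N) * u N
        + (2 * (N * h) ^ 2 * Lv * (k + L) * L⁻¹ * A ^ N + N * h * Lv * L⁻¹) * e := by
    simp only [B, C]; field_simp; ring
  rw [← hfinal]
  linarith [hu 0, mul_le_mul_of_nonneg_left hsum_u (by positivity : (0:ℝ) ≤ 2 * B),
    mul_le_mul_of_nonneg_left hsum_ε (by positivity : (0:ℝ) ≤ 2 * C)]

namespace SolvesScheme

variable {Ω : Type} [MeasurableSpace Ω] {P : Measure Ω} [IsFiniteMeasure P] {N d : ℕ} {h : ℝ}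
  {𝒢 : Filtration ℕ (inferInstance : MeasurableSpace Ω)} {ΔW : ℕ → Ω → Fin d → ℝ}

lemma sub {Y₁ Y₂ f₁ f₂ : ℕ → Ω → ℝ} {Z₁ Z₂ : ℕ → Ω → Fin d → ℝ}
    (hΔW : IncrementsOK P N d h 𝒢 ΔW) (h₁ : SolvesScheme P N d h 𝒢 ΔW Y₁ Z₁ f₁)
    (h₂ : SolvesScheme P N d h 𝒢 ΔW Y₂ Z₂ f₂) :
    SolvesScheme P N d h 𝒢 ΔW (Y₁ - Y₂) (Z₁ - Z₂) (f₁ - f₂) := by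
  obtain ⟨hY₁, hY₁m, hf₁, hf₁m, hY₁eq, hZ₁eq⟩ := h₁
  obtain ⟨hY₂, hY₂m, hf₂, hf₂m, hY₂eq, hZ₂eq⟩ := h₂
  refine ⟨fun n hn => (hY₁ n hn).sub (hY₂ n hn), fun n hn => (hY₁m n hn).sub (hY₂m n hn),
    fun n hn => (hf₁ n hn).sub (hf₂ n hn), fun n hn => (hf₁m n hn).sub (hf₂m n hn),
    fun n hn => ?_, fun n hn i => ?_⟩
  · filter_upwards [hY₁eq n hn, hY₂eq n hn, condExp_sub (m := 𝒢 n)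
      ((hY₁ (n + 1) hn).integrable one_le_two) ((hY₂ (n + 1) hn).integrable one_le_two)]
      with ω hY₁ω hY₂ω hsub
    simp only [Pi.sub_apply, hsub, hY₁ω, hY₂ω]
    ring
  · have hW := (hΔW n hn).2.1 i
    have hsub : P[fun ω => Y₁ (n + 1) ω * ΔW n ω i - Y₂ (n + 1) ω * ΔW n ω i|𝒢 n]
        =ᵐ[P] fun ω => (P[fun ω => Y₁ (n + 1) ω * ΔW n ω i|𝒢 n]) ω
          - (P[fun ω => Y₂ (n + 1) ω * ΔW n ω i|𝒢 n]) ω :=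
      condExp_sub ((hY₁ (n + 1) hn).integrable_mul hW) ((hY₂ (n + 1) hn).integrable_mul hW) _
    filter_upwards [hZ₁eq n hn i, hZ₂eq n hn i, hsub] with ω hZ₁ω hZ₂ω hsub
    simp only [Pi.sub_apply, sub_mul]
    rw [hZ₁ω, hZ₂ω, hsub]
    ring

lemma integral_sum_sq_le {Y f : ℕ → Ω → ℝ} {Z : ℕ → Ω → Fin d → ℝ}
    (hΔW : IncrementsOK P N d h 𝒢 ΔW) (hS : SolvesScheme P N d h 𝒢 ΔW Y Z f) (hh : 0 < h)
    {n : ℕ} (hn : n < N) :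
    h * ∫ ω, ∑ i, Z n ω i ^ 2 ∂P
      ≤ ∫ ω, Y (n + 1) ω ^ 2 ∂P - ∫ ω, (P[Y (n + 1)|𝒢 n]) ω ^ 2 ∂P := by
  obtain ⟨-, hW, hW0, hcov⟩ := hΔW n hn
  have hbessel := integral_sum_sq_condExp_mul_le_of_condExp_eq_zero (𝒢.le n) hh
    (hS.1 (n + 1) hn) (W := fun i ω => ΔW n ω i) hW hW0 hcov
  have hZ : ∫ ω, ∑ i, Z n ω i ^ 2 ∂P
      = h⁻¹ ^ 2 * ∫ ω, ∑ i, (P[Y (n + 1) * fun ω => ΔW n ω i|𝒢 n]) ω ^ 2 ∂P := by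
    rw [← integral_const_mul]
    refine integral_congr_ae ?_
    filter_upwards [ae_all_iff.2 (hS.2.2.2.2.2 n hn)] with ω hω
    simp only [hω, mul_sum, mul_pow]
    rfl
  rw [hZ]
  calc h * (h⁻¹ ^ 2 * ∫ ω, ∑ i, (P[Y (n + 1) * fun ω => ΔW n ω i|𝒢 n]) ω ^ 2 ∂P)
      ≤ h * (h⁻¹ ^ 2 * (h * (∫ ω, Y (n + 1) ω ^ 2 ∂P - ∫ ω, (P[Y (n + 1)|𝒢 n]) ω ^ 2 ∂P))) := by
        gcongr
    _ = _ := by field_simp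

lemma energy_step {Y f : ℕ → Ω → ℝ} {Z : ℕ → Ω → Fin d → ℝ} {k L Lv ε : ℝ} {φ ψ : Ω → ℝ}
    (hΔW : IncrementsOK P N d h 𝒢 ΔW) (hS : SolvesScheme P N d h 𝒢 ΔW Y Z f) (hh : 0 < h)
    (hL : 0 < L) {n : ℕ} (hn : n < N) (hφ : MemLp φ 2 P) (hψ : MemLp ψ 2 P)
    (hf : f n =ᵐ[P] fun ω => φ ω + ψ ω) (hφY : ∫ ω, φ ω * Y n ω ∂P ≤ k * ∫ ω, Y n ω ^ 2 ∂P)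
    (hψZ : ∫ ω, ψ ω ^ 2 ∂P ≤ Lv * ε + L * ∫ ω, ∑ i, Z n ω i ^ 2 ∂P) :
    (1 - h * (2 * k + 2 * L)) * ∫ ω, Y n ω ^ 2 ∂P + h / 2 * ∫ ω, ∑ i, Z n ω i ^ 2 ∂P
      ≤ ∫ ω, Y (n + 1) ω ^ 2 ∂P + h * Lv / (2 * L) * ε := by
  have hYeq : Y n =ᵐ[P] fun ω => (P[Y (n + 1)|𝒢 n]) ω + h * (φ ω + ψ ω) := by
    filter_upwards [hS.2.2.2.2.1 n hn, hf] with ω hYω hfω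
    rw [hYω, hfω]
  have hY := integral_sq_le_of_ae_eq_add hh hL (hS.1 n hn.le)
    ((hS.1 (n + 1) hn).condExp one_le_two) hφ hψ hYeq hφY
  have hZ := hS.integral_sum_sq_le hΔW hh hn
  have hψ' : h / (2 * L) * ∫ ω, ψ ω ^ 2 ∂P
      ≤ h * Lv / (2 * L) * ε + h / 2 * ∫ ω, ∑ i, Z n ω i ^ 2 ∂P :=
    calc h / (2 * L) * ∫ ω, ψ ω ^ 2 ∂P
        ≤ h / (2 * L) * (Lv * ε + L * ∫ ω, ∑ i, Z n ω i ^ 2 ∂P) := by gcongr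
      _ = _ := by field_simp
  linarith

end SolvesScheme

theorem deltaZ_bound_discrete_scheme_general
    {Ω : Type} [MeasurableSpace Ω] (P : Measure Ω) [IsProbabilityMeasure P]
    (N : ℕ) (hN : 1 ≤ N) (h : ℝ) (hh : 0 < h) (d : ℕ)
    (𝒢 : Filtration ℕ (inferInstance : MeasurableSpace Ω))
    (ΔW : ℕ → Ω → Fin d → ℝ)
    (Y1 Y2 : ℕ → Ω → ℝ) (Z1 Z2 : ℕ → Ω → Fin d → ℝ) (f1 f2 : ℕ → Ω → ℝ)
    (k_y L_f L_v : ℝ) (hLf : 0 < L_f) (hLv : 0 ≤ L_v) (ε : ℕ → ℝ)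
    (hε : ∀ n < N, 0 ≤ ε n)
    (hInc : IncrementsOK P N d h 𝒢 ΔW)
    (hSol1 : SolvesScheme P N d h 𝒢 ΔW Y1 Z1 f1)
    (hSol2 : SolvesScheme P N d h 𝒢 ΔW Y2 Z2 f2)
    (hDrv : DriverDiff P N d 𝒢 k_y L_f L_v ε Y1 Y2 Z1 Z2 f1 f2)
    (hkyLf : 0 ≤ k_y + L_f)
    (hsmall : h * (2 * k_y + 2 * L_f) < 1)
    (A : ℝ) (hA : A = (1 - h * (2 * k_y + 2 * L_f))⁻¹) :
    ∑ n ∈ Finset.range N, h * ∫ ω, (∑ i, (Z1 n ω i - Z2 n ω i) ^ 2) ∂P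
      ≤ (2 + 4 * N * h * (k_y + L_f) * A ^ N)
          * (∫ ω, (Y1 N ω - Y2 N ω) ^ 2 ∂P)
        + (2 * (N * h) ^ 2 * L_v * (k_y + L_f) * L_f⁻¹ * A ^ N
            + N * h * L_v * L_f⁻¹)
          * (Finset.range N).sup'
              (nonempty_range_iff.mpr (Nat.one_le_iff_ne_zero.mp hN)) ε := by
  have hSol := hSol1.sub hInc hSol2
  have hmax : ∀ n < N,
      ε n ≤ (range N).sup' (nonempty_range_iff.mpr (Nat.one_le_iff_ne_zero.mp hN)) ε :=
    fun n hn => le_sup' ε (mem_range.2 hn)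
  refine sum_mul_le_of_energy_step (u := fun n => ∫ ω, (Y1 n ω - Y2 n ω) ^ 2 ∂P)
    (z := fun n => ∫ ω, ∑ i, (Z1 n ω i - Z2 n ω i) ^ 2 ∂P) hh hLf hLv hkyLf hsmall hA
    (fun n => integral_nonneg fun ω => sq_nonneg _)
    (fun n _ => integral_nonneg fun ω => sum_nonneg fun i _ => sq_nonneg _)
    ((hε 0 hN).trans (hmax 0 hN)) hmax fun n hn => ?_
  obtain ⟨φ, ψ, -, -, hφ, hψ, hf, hφY, hψZ⟩ := hDrv n hn
  exact hSol.energy_step hInc hh hLf hn hφ hψ hf hφY hψZ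

/-- Bound for the cumulative control error: if `k_y + L_f ≥ 0` and
`h·(2k_y + 2L_f) < 1`, then with `A = (1 − h·(2k_y + 2L_f))⁻¹`,
`Σ_{n<N} h·E[|δZ_n|²] ≤ (2 + 4·N·h·(k_y + L_f)·A^N)·E[(δY_N)²]
  + (2·(N·h)²·L_v·(k_y + L_f)·L_f⁻¹·A^N + N·h·L_v·L_f⁻¹)·max_{k<N} ε_k`. -/
theorem deltaZ_bound_discrete_scheme
    {Ω : Type} [MeasurableSpace Ω] (P : Measure Ω) [IsProbabilityMeasure P]
    (N : ℕ) (hN : 1 ≤ N) (h : ℝ) (hh : 0 < h) (d : ℕ) (hd : 1 ≤ d)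
    (𝒢 : Filtration ℕ (inferInstance : MeasurableSpace Ω))
    (ΔW : ℕ → Ω → Fin d → ℝ)
    (Y1 Y2 : ℕ → Ω → ℝ) (Z1 Z2 : ℕ → Ω → Fin d → ℝ) (f1 f2 : ℕ → Ω → ℝ)
    (k_y L_f L_v : ℝ) (hLf : 0 < L_f) (hLv : 0 ≤ L_v) (ε : ℕ → ℝ)
    (hε : ∀ n < N, 0 ≤ ε n)
    (hInc : IncrementsOK P N d h 𝒢 ΔW)
    (hSol1 : SolvesScheme P N d h 𝒢 ΔW Y1 Z1 f1)
    (hSol2 : SolvesScheme P N d h 𝒢 ΔW Y2 Z2 f2)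
    (hDrv : DriverDiff P N d 𝒢 k_y L_f L_v ε Y1 Y2 Z1 Z2 f1 f2)
    (hkyLf : 0 ≤ k_y + L_f)
    (hsmall : h * (2 * k_y + 2 * L_f) < 1)
    (A : ℝ) (hA : A = (1 - h * (2 * k_y + 2 * L_f))⁻¹) :
    ∑ n ∈ Finset.range N, h * ∫ ω, (∑ i, (Z1 n ω i - Z2 n ω i) ^ 2) ∂P
      ≤ (2 + 4 * N * h * (k_y + L_f) * A ^ N)
          * (∫ ω, (Y1 N ω - Y2 N ω) ^ 2 ∂P)
        + (2 * (N * h) ^ 2 * L_v * (k_y + L_f) * L_f⁻¹ * A ^ N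
            + N * h * L_v * L_f⁻¹)
          * (Finset.range N).sup'
              (nonempty_range_iff.mpr (Nat.one_le_iff_ne_zero.mp hN)) ε :=
  deltaZ_bound_discrete_scheme_general P N hN h hh d 𝒢 ΔW Y1 Y2 Z1 Z2 f1 f2 k_y L_f L_v hLf hLv ε hε
    hInc hSol1 hSol2 hDrv hkyLf hsmall A hA

end
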